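/- Let G be a finite connected simple graph with at least one edge. If G has the strict 1-density property, then G is homogeneous: there exists a pmf μ on the spanning trees of G whose edge probabilities η_μ(e) are constant over all edges e of G. -/

import Mathlib

open scoped Classical

noncomputable section

variable {V : Type*} [Fintype V] [DecidableEq V]

/-- `T` is (the edge set of) a spanning tree of the vertex-induced subgraph of `G`
on the vertex set `S`: its edges are edges of `G` with both endpoints in `S`,
it is acyclic, and every two vertices of `S` are joined by a path using edges of `T`. -/
def IsSpanningTreeOn (G : SimpleGraph V) (S : Finset V) (T : Finset (Sym2 V)) : Prop :=
  (↑T : Set (Sym2 V)) ⊆ G.edgeSet ∧ (∀ e ∈ T, ∀ v ∈ e, v ∈ S) ∧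
    (SimpleGraph.fromEdgeSet (↑T : Set (Sym2 V))).IsAcyclic ∧
    ∀ u ∈ S, ∀ w ∈ S, (SimpleGraph.fromEdgeSet (↑T : Set (Sym2 V))).Reachable u w

/-- A probability mass function on the spanning trees of the induced subgraph of `G` on `S`. -/
structure TreePMFOn (G : SimpleGraph V) (S : Finset V) where
  toFun : Finset (Sym2 V) → ℝ
  nonneg : ∀ T, 0 ≤ toFun T
  supp : ∀ T, toFun T ≠ 0 → IsSpanningTreeOn G S T
  sum_one : ∑ T : Finset (Sym2 V), toFun T = 1

/-- Edge probability `η_μ(e)`. -/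
def edgeProbOn {G : SimpleGraph V} {S : Finset V} (μ : TreePMFOn G S) (e : Sym2 V) : ℝ :=
  ∑ T : Finset (Sym2 V), if e ∈ T then μ.toFun T else 0

/-- Edges of `G` with both endpoints in `S`. -/
def inducedEdges (G : SimpleGraph V) (S : Finset V) : Finset (Sym2 V) :=
  G.edgeFinset.filter fun e => ∀ v ∈ e, v ∈ S

/-- Variance of the edge probabilities of `μ` over the edges within `S`. -/
def edgeVarOn {G : SimpleGraph V} {S : Finset V} (μ : TreePMFOn G S) : ℝ :=
  (∑ e ∈ inducedEdges G S, (edgeProbOn μ e) ^ 2) / ((inducedEdges G S).card : ℝ) -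
    ((∑ e ∈ inducedEdges G S, edgeProbOn μ e) / ((inducedEdges G S).card : ℝ)) ^ 2

/-- A pmf is fair if it minimizes the variance of the edge probabilities. -/
def IsFairOn {G : SimpleGraph V} {S : Finset V} (μ : TreePMFOn G S) : Prop :=
  ∀ ν : TreePMFOn G S, edgeVarOn μ ≤ edgeVarOn ν

/-- A fair tree: a spanning tree in the support of some fair pmf. -/
def IsFairTreeOn (G : SimpleGraph V) (S : Finset V) (T : Finset (Sym2 V)) : Prop :=
  ∃ μ : TreePMFOn G S, IsFairOn μ ∧ μ.toFun T ≠ 0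

/-- The 1-density `θ(H) = |E(H)|/(|V(H)|-1)` of the induced subgraph on `S`. -/
def density (G : SimpleGraph V) (S : Finset V) : ℝ :=
  ((inducedEdges G S).card : ℝ) / ((S.card : ℝ) - 1)

/-- `S` induces a member of `H(G)`: connected, vertex-induced, with at least one edge. -/
def InH (G : SimpleGraph V) (S : Finset V) : Prop :=
  (inducedEdges G S).Nonempty ∧ (G.induce (↑S : Set V)).Connected

/-- `S` induces a 1-densest subgraph of `G`. -/
def IsDensest (G : SimpleGraph V) (S : Finset V) : Prop :=
  InH G S ∧ ∀ S' : Finset V, InH G S' → density G S' ≤ density G S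

/-- `S` induces a minimal 1-densest subgraph of `G`. -/
def IsMinimalDensest (G : SimpleGraph V) (S : Finset V) : Prop :=
  IsDensest G S ∧ ∀ S' : Finset V, S' ⊆ S → S' ≠ S → ¬ IsDensest G S'

/-- The induced subgraph on `S` is homogeneous: some pmf on its spanning trees
has constant edge probabilities. -/
def IsHomogeneousOn (G : SimpleGraph V) (S : Finset V) : Prop :=
  ∃ μ : TreePMFOn G S, ∃ c : ℝ, ∀ e ∈ inducedEdges G S, edgeProbOn μ e = c

/-- The induced subgraph on `S` has the strict 1-density property. -/
def StrictDensityOn (G : SimpleGraph V) (S : Finset V) : Prop :=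
  ∀ S' : Finset V, S' ⊆ S → InH G S' → S' ≠ S → density G S' < density G S

/-!
Take a pmf `μ` on spanning trees minimizing `∑ e, η_μ(e) ^ 2`. Moving a little mass from a tree
`T` in its support to another spanning tree `T'` changes this sum to first order by
`2 (η_μ(T') - η_μ(T))`, so every tree in the support is a minimum spanning tree for the weight
`η_μ`. Let `b` be the least edge probability, attained at `xy`, and `S` the vertex set of the
component of `x` in the graph of edges with `η_μ = b`. A minimum spanning tree still spans `S`
with such edges, hence contains at least `|S| - 1` of them; averaging over `μ` gives
`|S| - 1 ≤ b · |A|` for the set `A` of these edges inside `S`. As the `η_μ(e)` add up to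
`|V| - 1`, also `b · |E| ≤ |V| - 1`, so `|A| / (|S| - 1) ≥ |E| / (|V| - 1)`: `S` is at least as
dense as `G`. Strict density forces `S = V`, and then `|A| ≥ |E|`, i.e. every edge has
probability `b`.
-/
open SimpleGraph Finset

namespace SimpleGraph

omit [Fintype V] [DecidableEq V]

variable {G H : SimpleGraph V}

lemma reachable_le_reachable_of_adj_le (h : G.Adj ≤ H.Reachable) : G.Reachable ≤ H.Reachable := by
  rw [reachable_eq_reflTransGen, reachable_eq_reflTransGen] at *
  exact Relation.reflTransGen_closed h

lemma connected_induce_setOf_reachable (H : SimpleGraph V) (x : V) :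
    (H.induce {v | H.Reachable x v}).Connected := by
  have hsupp : {v | H.Reachable x v} = (H.connectedComponentMk x).supp := by
    ext v
    simp [ConnectedComponent.mem_supp_iff, ConnectedComponent.eq, reachable_comm]
  exact hsupp ▸ ConnectedComponent.connected_toSimpleGraph _

lemma IsAcyclic.not_reachable_deleteEdges_of_mem_edges (hH : H.IsAcyclic) {u v : V}
    {p : H.Walk u v} (hp : p.IsPath) {e : Sym2 V} (he : e ∈ p.edges) :
    ¬(H.deleteEdges {e}).Reachable u v := by
  rintro ⟨q⟩
  have hpq : (q.mapLe (H.deleteEdges_le {e})).toPath = ⟨p, hp⟩ :=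
    (hH.subsingleton_path u v).elim _ _
  have heq : e ∈ q.edges := by
    rw [← Walk.edges_mapLe_eq_edges (H.deleteEdges_le {e})]
    exact Walk.edges_toPath_subset_edges _ (by rwa [hpq])
  simpa [edgeSet_deleteEdges] using q.edges_subset_edgeSet heq

lemma IsTree.deleteEdges_sup_edge (hH : H.IsTree) {c d : V} {p : H.Walk c d} (hp : p.IsPath)
    (hcd : ¬H.Adj c d) {e : Sym2 V} (he : e ∈ p.edges) :
    (H.deleteEdges {e} ⊔ edge c d).IsTree := by
  have := hH.connected.nonempty
  refine ⟨⟨fun u v => reachable_le_reachable_of_adj_le (fun a b hab => ?_) u v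
    (hH.connected u v)⟩, ?_⟩
  · by_cases hae : s(a, b) = e
    · subst hae
      -- `e` lies on the cycle closed by the new edge, so it is no bridge of `H ⊔ edge c d`.
      have hdc : (H ⊔ edge c d).Adj d c := by
        have hne : d ≠ c := by
          rintro rfl
          rw [Walk.eq_nil_iff_nil.mpr (Walk.isPath_iff_nil.mp hp)] at he
          simp at he
        simp [edge_adj, hne]
      have hcyc : (Walk.cons hdc (p.mapLe le_sup_left)).IsCycle := by
        refine (Walk.cons_isCycle_iff _ _).mpr ⟨(Walk.isPath_mapLe _).mpr hp, ?_⟩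
        rw [Walk.edges_mapLe_eq_edges]
        exact fun h => hcd (p.adj_of_mem_edges (Sym2.eq_swap ▸ h))
      obtain ⟨-, hreach⟩ := adj_and_reachable_delete_edges_iff_exists_cycle (v := a) (w := b) |>.mpr
        ⟨d, _, hcyc, by simpa [Walk.edges_mapLe_eq_edges] using Or.inr he⟩
      exact hreach.mono (by rw [deleteEdges_sup]; exact sup_le_sup_left (deleteEdges_le _) _)
    · exact Adj.reachable (G := H.deleteEdges {e} ⊔ edge c d)
        (Or.inl ((deleteEdges_adj ..).mpr ⟨hab, hae⟩))
  · exact IsAcyclic.sup_edge_of_not_reachable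
      (hH.isAcyclic.not_reachable_deleteEdges_of_mem_edges hp he)
      (hH.isAcyclic.anti (deleteEdges_le _))

end SimpleGraph

variable {G : SimpleGraph V} {S : Finset V} {T : Finset (Sym2 V)}

lemma IsSpanningTreeOn.subset_inducedEdges (hT : IsSpanningTreeOn G S T) :
    T ⊆ inducedEdges G S := fun e he =>
  mem_filter.mpr ⟨mem_edgeFinset.mpr (hT.1 he), hT.2.1 e he⟩

lemma inducedEdges_subset : inducedEdges G S ⊆ G.edgeFinset :=
  filter_subset _ _

lemma inducedEdges_univ : inducedEdges G univ = G.edgeFinset :=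
  filter_true_of_mem fun _ _ _ _ => mem_univ _

lemma one_lt_card_of_mem_inducedEdges {e : Sym2 V} (he : e ∈ inducedEdges G S) : 1 < #S := by
  induction e using Sym2.ind with | h x y => ?_
  obtain ⟨hxy, hS⟩ := mem_filter.mp he
  exact one_lt_card.mpr ⟨x, hS x (Sym2.mem_mk_left x y), y, hS y (Sym2.mem_mk_right x y),
    G.ne_of_adj (mem_edgeFinset.mp hxy)⟩

omit [DecidableEq V] in
lemma isSpanningTreeOn_univ_iff [Nonempty V] :
    IsSpanningTreeOn G univ T ↔ ↑T ⊆ G.edgeSet ∧ (fromEdgeSet (T : Set (Sym2 V))).IsTree :=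
  ⟨fun hT => ⟨hT.1, ⟨fun u v => hT.2.2.2 u (mem_univ u) v (mem_univ v)⟩, hT.2.2.1⟩,
    fun hT => ⟨hT.1, fun _ _ _ _ => mem_univ _, hT.2.isAcyclic,
      fun u _ v _ => hT.2.connected u v⟩⟩

lemma IsSpanningTreeOn.card_add_one [Nonempty V] (hT : IsSpanningTreeOn G univ T) :
    #T + 1 = Fintype.card V := by
  have hTree := (isSpanningTreeOn_univ_iff.mp hT).2
  have hedges : (fromEdgeSet (T : Set (Sym2 V))).edgeFinset = T := by
    ext e
    simp only [mem_edgeFinset, edgeSet_fromEdgeSet, Set.mem_sdiff, mem_coe,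
      and_iff_left_iff_imp]
    exact fun he => G.not_isDiag_of_mem_edgeSet (hT.1 he)
  rw [← hedges]
  exact hTree.card_edgeFinset

omit [DecidableEq V] in
lemma exists_isSpanningTreeOn_univ (hG : G.Connected) : ∃ T, IsSpanningTreeOn G univ T := by
  have := hG.nonempty
  obtain ⟨H, hle, hH⟩ := hG.exists_isTree_le
  refine ⟨H.edgeFinset, isSpanningTreeOn_univ_iff.mpr ⟨?_, ?_⟩⟩
  · simpa using edgeSet_mono hle
  · simpa using hH

omit [Fintype V] in
lemma fromEdgeSet_insert_erase (T : Finset (Sym2 V)) (e : Sym2 V) (c d : V) :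
    fromEdgeSet ↑(insert s(c, d) (T.erase e)) =
      (fromEdgeSet (T : Set (Sym2 V))).deleteEdges {e} ⊔ edge c d := by
  ext a b
  simp only [fromEdgeSet_adj, coe_insert, coe_erase, Set.mem_insert_iff, Set.mem_sdiff,
    mem_coe, Set.mem_singleton_iff, Sym2.eq_iff, sup_adj, deleteEdges_adj, edge_adj]
  tauto

lemma IsSpanningTreeOn.exchange (hT : IsSpanningTreeOn G univ T) {c d : V}
    {p : (fromEdgeSet (T : Set (Sym2 V))).Walk c d} (hp : p.IsPath) (hcd : s(c, d) ∈ G.edgeSet)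
    (hcdT : s(c, d) ∉ T) {e : Sym2 V} (he : e ∈ p.edges) :
    IsSpanningTreeOn G univ (insert s(c, d) (T.erase e)) := by
  have : Nonempty V := ⟨c⟩
  refine isSpanningTreeOn_univ_iff.mpr ⟨?_, ?_⟩
  · intro f hf
    simp only [coe_insert, coe_erase, Set.mem_insert_iff, Set.mem_sdiff] at hf
    rcases hf with rfl | hf
    · exact hcd
    · exact hT.1 hf.1
  · rw [fromEdgeSet_insert_erase]
    refine (isSpanningTreeOn_univ_iff.mp hT).2.deleteEdges_sup_edge hp ?_ he
    exact fun h => hcdT (by simpa using ((fromEdgeSet_adj _).mp h).1)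

def IsMinSpanningTree (G : SimpleGraph V) (w : Sym2 V → ℝ) (T : Finset (Sym2 V)) : Prop :=
  IsSpanningTreeOn G univ T ∧ ∀ T', IsSpanningTreeOn G univ T' → ∑ e ∈ T, w e ≤ ∑ e ∈ T', w e

variable {w : Sym2 V → ℝ}

lemma IsMinSpanningTree.le_of_mem_edges (hT : IsMinSpanningTree G w T) {c d : V}
    {p : (fromEdgeSet (T : Set (Sym2 V))).Walk c d} (hp : p.IsPath) (hcd : s(c, d) ∈ G.edgeSet)
    (hcdT : s(c, d) ∉ T) {e : Sym2 V} (he : e ∈ p.edges) : w e ≤ w s(c, d) := by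
  have heT := p.edges_subset_edgeSet he
  rw [edgeSet_fromEdgeSet] at heT
  have hle := hT.2 _ (hT.1.exchange hp hcd hcdT he)
  rw [sum_insert fun h => hcdT (mem_of_mem_erase h), sum_erase_eq_sub heT.1] at hle
  linarith

/-- By exchange, each edge on the tree path between the ends of an edge `f` weighs at most `w f`. -/
lemma IsMinSpanningTree.reachable_filter_le (hT : IsMinSpanningTree G w T) (b : ℝ) :
    (fromEdgeSet (T.filter (w · ≤ b) : Set (Sym2 V))).Reachable =
      (fromEdgeSet (G.edgeFinset.filter (w · ≤ b) : Set (Sym2 V))).Reachable := by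
  refine le_antisymm (Reachable.mono' (fromEdgeSet_mono ?_)) (reachable_le_reachable_of_adj_le ?_)
  · exact_mod_cast filter_subset_filter _ (hT.1.subset_inducedEdges.trans inducedEdges_subset)
  intro c d hcd
  obtain ⟨hcdB, hne⟩ := (fromEdgeSet_adj _).mp hcd
  obtain ⟨hcdE, hcdb⟩ := mem_filter.mp (mem_coe.mp hcdB)
  by_cases hcdT : s(c, d) ∈ T
  · exact ((fromEdgeSet_adj _).mpr ⟨by simpa using ⟨hcdT, hcdb⟩, hne⟩).reachable
  obtain ⟨q⟩ := hT.1.2.2.2 c (mem_univ c) d (mem_univ d)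
  refine ⟨q.toPath.1.transfer _ fun e he => ?_⟩
  have he' := q.toPath.1.edges_subset_edgeSet he
  simp only [edgeSet_fromEdgeSet, Set.mem_sdiff, mem_coe, coe_filter, Set.mem_ofPred_eq] at he' ⊢
  exact ⟨⟨he'.1, (hT.le_of_mem_edges q.toPath.2 (mem_edgeFinset.mp hcdE) hcdT he).trans hcdb⟩,
    he'.2⟩

lemma card_le_card_filter_add_one_of_connected {F : Finset (Sym2 V)}
    (h : ((fromEdgeSet (F : Set (Sym2 V))).induce (S : Set V)).Connected) :
    #S ≤ #(F.filter fun e => ∀ v ∈ e, v ∈ S) + 1 := by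
  set F' := F.filter fun e => ∀ v ∈ e, v ∈ S
  have hind : (fromEdgeSet (F : Set (Sym2 V))).induce (S : Set V) =
      (fromEdgeSet (F' : Set (Sym2 V))).induce (S : Set V) := by
    ext ⟨a, ha⟩ ⟨b, hb⟩
    have ha : a ∈ S := ha
    have hb : b ∈ S := hb
    simp [F', ha, hb]
  rw [hind] at h
  calc #S = Nat.card (S : Set V) := (Nat.card_coe_set_eq _).trans (Set.ncard_coe_finset S) |>.symm
    _ ≤ Nat.card ((fromEdgeSet (F' : Set (Sym2 V))).induce (S : Set V)).edgeSet + 1 :=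
      h.card_vert_le_card_edgeSet_add_one
    _ ≤ Nat.card (fromEdgeSet (F' : Set (Sym2 V))).edgeSet + 1 := by
      gcongr
      exact Nat.card_le_card_of_injective _ (Embedding.induce _).mapEdgeSet.injective
    _ ≤ Nat.card (F' : Set (Sym2 V)) + 1 := by
      gcongr
      exact Nat.card_mono F'.finite_toSet (by simp [edgeSet_fromEdgeSet])
    _ = #F' + 1 := by simp

def sublevelComponent (G : SimpleGraph V) (w : Sym2 V → ℝ) (b : ℝ) (x : V) : Finset V :=
  univ.filter ((fromEdgeSet (G.edgeFinset.filter (w · ≤ b) : Set (Sym2 V))).Reachable x)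

lemma coe_sublevelComponent (b : ℝ) (x : V) : (sublevelComponent G w b x : Set V) =
    {v | (fromEdgeSet (G.edgeFinset.filter (w · ≤ b) : Set (Sym2 V))).Reachable x v} := by
  ext v
  simp [sublevelComponent]

lemma connected_induce_sublevelComponent (b : ℝ) (x : V) :
    (G.induce (sublevelComponent G w b x : Set V)).Connected := by
  rw [coe_sublevelComponent]
  refine (connected_induce_setOf_reachable _ x).mono (comap_monotone _ ?_)
  exact (fromEdgeSet_le G).mpr fun e he => (mem_edgeFinset.mp (mem_filter.mp he.1).1)

lemma mk_mem_inducedEdges_sublevelComponent {x y : V} (hxy : s(x, y) ∈ G.edgeFinset)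
    {b : ℝ} (hb : w s(x, y) ≤ b) : s(x, y) ∈ inducedEdges G (sublevelComponent G w b x) := by
  refine mem_filter.mpr ⟨hxy, fun v hv => ?_⟩
  rw [← mem_coe, coe_sublevelComponent]
  rcases Sym2.mem_iff.mp hv with rfl | rfl
  · exact Reachable.rfl
  · refine Adj.reachable ((fromEdgeSet_adj _).mpr ⟨by simpa using ⟨mem_edgeFinset.mp hxy, hb⟩, ?_⟩)
    exact G.ne_of_adj (mem_edgeFinset.mp hxy)

lemma IsMinSpanningTree.card_sublevelComponent_le (hT : IsMinSpanningTree G w T) (b : ℝ) (x : V) :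
    #(sublevelComponent G w b x) ≤
      #(((inducedEdges G (sublevelComponent G w b x)).filter (w · ≤ b)).filter (· ∈ T)) + 1 := by
  have hconn := connected_induce_setOf_reachable
    (fromEdgeSet (T.filter (w · ≤ b) : Set (Sym2 V))) x
  rw [hT.reachable_filter_le b, ← coe_sublevelComponent] at hconn
  refine (card_le_card_filter_add_one_of_connected hconn).trans
    (add_le_add_left (card_le_card ?_) 1)
  intro e he
  simp only [mem_filter] at he ⊢
  exact ⟨⟨mem_filter.mpr ⟨inducedEdges_subset (hT.1.subset_inducedEdges he.1.1), he.2⟩, he.1.2⟩,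
    he.1.1⟩

namespace TreePMFOn

def pure (hT : IsSpanningTreeOn G S T) : TreePMFOn G S where
  toFun R := if R = T then 1 else 0
  nonneg R := by split_ifs <;> norm_num
  supp R hR := by
    rw [ite_ne_right_iff] at hR
    exact hR.1 ▸ hT
  sum_one := by simp

def moveMass (μ : TreePMFOn G S) {T' : Finset (Sym2 V)} (hT' : IsSpanningTreeOn G S T') {ε : ℝ}
    (hε : 0 < ε) (hεT : ε ≤ μ.toFun T) : TreePMFOn G S where
  toFun R := μ.toFun R + ε * ((if R = T' then 1 else 0) - if R = T then 1 else 0)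
  nonneg R := by
    have := μ.nonneg R
    split_ifs with h₁ h₂ <;> subst_vars <;> linarith
  supp R hR := by
    by_cases h₁ : R = T'
    · exact h₁ ▸ hT'
    by_cases h₂ : R = T
    · exact h₂ ▸ μ.supp T (by linarith)
    exact μ.supp R (by simpa [h₁, h₂] using hR)
  sum_one := by
    simp [sum_add_distrib, ← mul_sum, μ.sum_one]

lemma edgeProbOn_moveMass (μ : TreePMFOn G S) {T' : Finset (Sym2 V)}
    (hT' : IsSpanningTreeOn G S T') {ε : ℝ} (hε : 0 < ε) (hεT : ε ≤ μ.toFun T) (e : Sym2 V) :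
    edgeProbOn (μ.moveMass hT' hε hεT) e =
      edgeProbOn μ e + ε * ((if e ∈ T' then 1 else 0) - if e ∈ T then 1 else 0) := by
  simp only [edgeProbOn, moveMass]
  rw [← sum_filter, ← sum_filter, sum_add_distrib, ← mul_sum, sum_sub_distrib, sum_ite_eq',
    sum_ite_eq']
  simp

end TreePMFOn

/-- The minimizers of `sumSqEdgeProb` are the fair pmfs: `∑ e, edgeProbOn μ e = #S - 1` does not
depend on `μ`, so `edgeVarOn μ` is an increasing affine function of `sumSqEdgeProb μ`. -/
def sumSqEdgeProb (μ : TreePMFOn G S) : ℝ :=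
  ∑ e ∈ inducedEdges G S, edgeProbOn μ e ^ 2

lemma exists_forall_sumSqEdgeProb_le (μ₀ : TreePMFOn G S) :
    ∃ μ : TreePMFOn G S, ∀ ν : TreePMFOn G S, sumSqEdgeProb μ ≤ sumSqEdgeProb ν := by
  let C : Set (Finset (Sym2 V) → ℝ) :=
    stdSimplex ℝ _ ∩ {f | ∀ R, f R ≠ 0 → IsSpanningTreeOn G S R}
  have hC : IsCompact C := by
    refine (isCompact_stdSimplex ℝ _).inter_right ?_
    simp only [Set.ofPred_forall]
    refine isClosed_iInter fun R => ?_
    by_cases hR : IsSpanningTreeOn G S R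
    · simp [hR]
    · simpa [hR] using isClosed_eq (continuous_apply R) continuous_const
  obtain ⟨f, hf, hmin⟩ := hC.exists_isMinOn ⟨μ₀.toFun, ⟨μ₀.nonneg, μ₀.sum_one⟩, μ₀.supp⟩
    (f := fun f => ∑ e ∈ inducedEdges G S, (∑ R, if e ∈ R then f R else 0) ^ 2)
    (Continuous.continuousOn <| continuous_finsetSum _ fun e _ =>
      (continuous_finsetSum _ fun R _ => by
        by_cases h : e ∈ R <;> simp [h, continuous_apply, continuous_const]).pow 2)
  exact ⟨⟨f, hf.1.1, hf.2, hf.1.2⟩, fun ν => hmin ⟨⟨ν.nonneg, ν.sum_one⟩, ν.supp⟩⟩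

lemma nonneg_of_forall_mul_add_sq_mul_nonneg {a c δ : ℝ} (hδ : 0 < δ)
    (h : ∀ ε, 0 < ε → ε ≤ δ → 0 ≤ ε * a + ε ^ 2 * c) : 0 ≤ a := by
  have hcont : Continuous fun ε : ℝ => a + ε * c := by fun_prop
  have hlim := (hcont.tendsto 0).mono_left (nhdsWithin_le_nhds (s := Set.Ioi 0))
  simp only [zero_mul, add_zero] at hlim
  refine ge_of_tendsto hlim ?_
  filter_upwards [Ioc_mem_nhdsGT hδ] with ε ⟨hε, hεδ⟩
  have := h ε hε hεδ
  nlinarith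

/-- Along `moveMass` from `T` to `T'`, `sumSqEdgeProb` has derivative
`2 (∑ e ∈ T', η e - ∑ e ∈ T, η e)`. -/
lemma sum_edgeProbOn_le_of_forall_sumSqEdgeProb_le {μ : TreePMFOn G S}
    (hμ : ∀ ν : TreePMFOn G S, sumSqEdgeProb μ ≤ sumSqEdgeProb ν) (hT : μ.toFun T ≠ 0)
    {T' : Finset (Sym2 V)} (hT' : IsSpanningTreeOn G S T') :
    ∑ e ∈ T, edgeProbOn μ e ≤ ∑ e ∈ T', edgeProbOn μ e := by
  set d : Sym2 V → ℝ := fun e => (if e ∈ T' then 1 else 0) - if e ∈ T then 1 else 0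
  have hsum : ∑ e ∈ inducedEdges G S, edgeProbOn μ e * d e =
      ∑ e ∈ T', edgeProbOn μ e - ∑ e ∈ T, edgeProbOn μ e := by
    simp only [d, mul_sub, mul_ite, mul_one, mul_zero, sum_sub_distrib, ← sum_filter,
      filter_mem_eq_inter, inter_eq_right.mpr hT'.subset_inducedEdges,
      inter_eq_right.mpr (μ.supp T hT).subset_inducedEdges]
  have hμT : 0 < μ.toFun T := (μ.nonneg T).lt_of_ne' hT
  suffices 0 ≤ 2 * (∑ e ∈ T', edgeProbOn μ e - ∑ e ∈ T, edgeProbOn μ e) by linarith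
  refine nonneg_of_forall_mul_add_sq_mul_nonneg (c := ∑ e ∈ inducedEdges G S, d e ^ 2) hμT
    fun ε hε hεT => ?_
  have hle := hμ (μ.moveMass hT' hε hεT)
  simp only [sumSqEdgeProb, TreePMFOn.edgeProbOn_moveMass] at hle
  change _ ≤ ∑ e ∈ _, (edgeProbOn μ e + ε * d e) ^ 2 at hle
  have hexp : ∀ e, (edgeProbOn μ e + ε * d e) ^ 2 =
      edgeProbOn μ e ^ 2 + ε * (2 * (edgeProbOn μ e * d e)) + ε ^ 2 * d e ^ 2 := fun e => by ring
  simp only [hexp, sum_add_distrib, ← mul_sum, hsum] at hle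
  linarith

lemma sum_edgeProbOn_eq_sum_mul_card (μ : TreePMFOn G S) (A : Finset (Sym2 V)) :
    ∑ e ∈ A, edgeProbOn μ e = ∑ T, μ.toFun T * #(A.filter (· ∈ T)) := by
  simp only [edgeProbOn]
  rw [sum_comm]
  refine sum_congr rfl fun T _ => ?_
  rw [← sum_filter, sum_const, nsmul_eq_mul, mul_comm]

lemma le_sum_edgeProbOn (μ : TreePMFOn G S) (A : Finset (Sym2 V)) {k : ℝ}
    (h : ∀ T, μ.toFun T ≠ 0 → k ≤ #(A.filter (· ∈ T))) : k ≤ ∑ e ∈ A, edgeProbOn μ e := by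
  rw [sum_edgeProbOn_eq_sum_mul_card]
  calc k = ∑ T, μ.toFun T * k := by rw [← sum_mul, μ.sum_one, one_mul]
    _ ≤ _ := sum_le_sum fun T _ => by
      by_cases hT : μ.toFun T = 0
      · simp [hT]
      · exact mul_le_mul_of_nonneg_left (h T hT) (μ.nonneg T)

lemma sum_edgeProbOn_le_card_sub_one [Nonempty V] (μ : TreePMFOn G univ) (A : Finset (Sym2 V)) :
    ∑ e ∈ A, edgeProbOn μ e ≤ Fintype.card V - 1 := by
  rw [sum_edgeProbOn_eq_sum_mul_card]
  calc _ ≤ ∑ T, μ.toFun T * (Fintype.card V - 1 : ℝ) := sum_le_sum fun T _ => by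
        by_cases hT : μ.toFun T = 0
        · simp [hT]
        refine mul_le_mul_of_nonneg_left ?_ (μ.nonneg T)
        have hcard := (μ.supp T hT).card_add_one
        have : #(A.filter (· ∈ T)) ≤ #T := card_le_card fun e he => (mem_filter.mp he).2
        rw [le_sub_iff_add_le]
        exact_mod_cast hcard ▸ Nat.add_le_add_right this 1
    _ = Fintype.card V - 1 := by rw [← sum_mul, μ.sum_one, one_mul]

lemma isMinSpanningTree_of_forall_sumSqEdgeProb_le {μ : TreePMFOn G univ}
    (hμ : ∀ ν : TreePMFOn G univ, sumSqEdgeProb μ ≤ sumSqEdgeProb ν) (hT : μ.toFun T ≠ 0) :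
    IsMinSpanningTree G (edgeProbOn μ) T :=
  ⟨μ.supp T hT, fun _ hT' => sum_edgeProbOn_le_of_forall_sumSqEdgeProb_le hμ hT hT'⟩

lemma card_sublevelComponent_sub_one_le {μ : TreePMFOn G univ}
    (hμ : ∀ ν : TreePMFOn G univ, sumSqEdgeProb μ ≤ sumSqEdgeProb ν) (b : ℝ) (x : V) :
    (#(sublevelComponent G (edgeProbOn μ) b x) : ℝ) - 1 ≤
      ∑ e ∈ (inducedEdges G (sublevelComponent G (edgeProbOn μ) b x)).filter (edgeProbOn μ · ≤ b),
        edgeProbOn μ e := by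
  refine le_sum_edgeProbOn μ _ fun T hT => ?_
  rw [sub_le_iff_le_add]
  exact_mod_cast (isMinSpanningTree_of_forall_sumSqEdgeProb_le hμ hT).card_sublevelComponent_le b x

lemma div_le_div_of_le_mul_of_mul_le {a b m n s : ℝ} (ha : 0 ≤ a) (hm : 0 ≤ m) (hn : 0 < n)
    (hs : 0 < s) (hsa : s ≤ b * a) (hbm : b * m ≤ n) : m / n ≤ a / s := by
  rw [div_le_div_iff₀ hn hs]
  nlinarith [mul_le_mul_of_nonneg_left hsa hm, mul_le_mul_of_nonneg_right hbm ha]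

lemma card_edgeFinset_div_le_of_forall_sumSqEdgeProb_le {μ : TreePMFOn G univ}
    (hμ : ∀ ν : TreePMFOn G univ, sumSqEdgeProb μ ≤ sumSqEdgeProb ν) {b : ℝ}
    (hb : ∀ e ∈ G.edgeFinset, b ≤ edgeProbOn μ e) {x : V}
    (hS : 1 < #(sublevelComponent G (edgeProbOn μ) b x)) :
    (#G.edgeFinset : ℝ) / (Fintype.card V - 1) ≤
      #((inducedEdges G (sublevelComponent G (edgeProbOn μ) b x)).filter (edgeProbOn μ · ≤ b)) /
        (#(sublevelComponent G (edgeProbOn μ) b x) - 1) := by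
  have : Nonempty V := ⟨x⟩
  set S := sublevelComponent G (edgeProbOn μ) b x
  set A := (inducedEdges G S).filter (edgeProbOn μ · ≤ b)
  have hA : ∀ e ∈ A, edgeProbOn μ e = b := fun e he =>
    le_antisymm (mem_filter.mp he).2 (hb e (inducedEdges_subset (mem_filter.mp he).1))
  have hSA : (#S : ℝ) - 1 ≤ b * #A := by
    have h : (#S : ℝ) - 1 ≤ ∑ e ∈ A, edgeProbOn μ e := card_sublevelComponent_sub_one_le hμ b x
    rwa [sum_congr rfl hA, sum_const, nsmul_eq_mul, mul_comm] at h
  have hEV : b * #G.edgeFinset ≤ Fintype.card V - 1 := by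
    simpa [mul_comm] using (sum_le_sum hb).trans (sum_edgeProbOn_le_card_sub_one μ _)
  have hS' : (1 : ℝ) < #S := by exact_mod_cast hS
  have hSV : (#S : ℝ) ≤ Fintype.card V := by exact_mod_cast card_le_univ S
  exact div_le_div_of_le_mul_of_mul_le (by positivity) (by positivity) (by linarith) (by linarith)
    hSA hEV

/-- A finite connected simple graph with at least one edge that has the
strict 1-density property is homogeneous: some pmf on its spanning trees has constant
edge probabilities. -/
theorem homogeneous_of_strictDensity
    {V : Type*} [Fintype V] [DecidableEq V] (G : SimpleGraph V) (hG : G.Connected)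
    (hE : G.edgeFinset.Nonempty) (hstrict : StrictDensityOn G Finset.univ) :
    IsHomogeneousOn G Finset.univ := by
  obtain ⟨T₀, hT₀⟩ := exists_isSpanningTreeOn_univ hG
  obtain ⟨μ, hμ⟩ := exists_forall_sumSqEdgeProb_le (TreePMFOn.pure hT₀)
  obtain ⟨f₀, hf₀, hmin⟩ := G.edgeFinset.exists_min_image (edgeProbOn μ) hE
  induction f₀ using Sym2.ind with | h x y => ?_
  have hxy := mk_mem_inducedEdges_sublevelComponent hf₀ (le_refl (edgeProbOn μ s(x, y)))
  have hS := one_lt_card_of_mem_inducedEdges hxy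
  have hdiv := card_edgeFinset_div_le_of_forall_sumSqEdgeProb_le hμ hmin hS
  set b := edgeProbOn μ s(x, y)
  set S := sublevelComponent G (edgeProbOn μ) b x
  set A := (inducedEdges G S).filter (edgeProbOn μ · ≤ b)
  have hSu : S = univ := by
    by_contra hSu
    refine (hstrict S (subset_univ S) ⟨⟨_, hxy⟩, connected_induce_sublevelComponent _ x⟩
      hSu).not_ge ?_
    rw [density, density, inducedEdges_univ, card_univ]
    exact hdiv.trans (div_le_div_of_nonneg_right (by exact_mod_cast card_filter_le _ _)
      (by simpa using hS.le))
  have hAE : A ⊆ G.edgeFinset := (filter_subset _ _).trans inducedEdges_subset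
  have hV : (0 : ℝ) < Fintype.card V - 1 := by
    rw [sub_pos, ← card_univ, ← hSu]
    exact_mod_cast hS
  rw [hSu, card_univ, div_le_div_iff_of_pos_right hV] at hdiv
  refine ⟨μ, b, fun e he => le_antisymm ?_ (hmin e (inducedEdges_subset he))⟩
  rw [inducedEdges_univ, ← eq_of_subset_of_card_le hAE (by exact_mod_cast hdiv)] at he
  exact (mem_filter.mp he).2
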